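/- For each i with 2 ≤ i ≤ 19, the cone σᵢ contains no point all four of whose coordinates are strictly positive; that is, σᵢ does not meet the interior of the cone σ₁ = cone(e₁,e₂,e₃,e₄) (the open positive orthant). -/
import Mathlib


open Matrix

noncomputable section

def e1 : Fin 4 → ℝ := ![1, 0, 0, 0]
def e2 : Fin 4 → ℝ := ![0, 1, 0, 0]
def e3 : Fin 4 → ℝ := ![0, 0, 1, 0]
def e4 : Fin 4 → ℝ := ![0, 0, 0, 1]
def d1 : Fin 4 → ℝ := ![-1, 0, -2, 1]
def d2 : Fin 4 → ℝ := ![-2, -1, 0, 1]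
def d3 : Fin 4 → ℝ := ![0, -2, -1, 1]
def d4 : Fin 4 → ℝ := ![1, 0, 1, -1]

/-- The cone generated by four vectors: all nonnegative linear combinations. -/
def cone4 (v1 v2 v3 v4 : Fin 4 → ℝ) : Set (Fin 4 → ℝ) :=
  {x | ∃ a b c d : ℝ, 0 ≤ a ∧ 0 ≤ b ∧ 0 ≤ c ∧ 0 ≤ d ∧
    x = a • v1 + b • v2 + c • v3 + d • v4}

def σc : Fin 19 → Set (Fin 4 → ℝ) :=
  ![cone4 e1 e2 e3 e4,
    cone4 d1 e2 e3 e4,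
    cone4 e1 d2 e3 e4,
    cone4 e1 e2 d3 e4,
    cone4 e1 e2 e3 d4,
    cone4 d1 d2 e3 e4,
    cone4 e1 d2 d3 e4,
    cone4 d1 e2 d3 e4,
    cone4 e1 d2 e3 d3,
    cone4 e1 e2 d3 d1,
    cone4 d1 e2 e3 d2,
    cone4 e1 e2 d1 d4,
    cone4 e1 d3 e3 d4,
    cone4 d2 e2 e3 d4,
    cone4 e1 d1 d3 d4,
    cone4 d1 e2 d2 d4,
    cone4 d3 d2 e3 d4,
    cone4 d1 d2 d3 e4,
    cone4 d1 d2 d3 d4]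

/-- For `2 ≤ i ≤ 19`, the cone σᵢ contains no point with all four coordinates
strictly positive, i.e. σᵢ misses the interior of σ₁ (the open positive orthant). -/
theorem cones_miss_open_positive_orthant :
    ∀ i : Fin 19, i ≠ 0 → ∀ x ∈ σc i, ¬ (∀ k : Fin 4, 0 < x k) := by
  intro i hi x hx hpos
  fin_cases i
  · exact hi rfl
  all_goals
    simp only [σc, Matrix.cons_val_zero, Matrix.cons_val_one, Matrix.head_cons,
      Matrix.cons_val_succ, cone4, Set.mem_setOf_eq] at hx
  all_goals
    obtain ⟨a, b, c, d, ha, hb, hc, hd, rfl⟩ := hx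
    have h0 := hpos 0
    have h1 := hpos 1
    have h2 := hpos 2
    have h3 := hpos 3
    simp [e1, e2, e3, e4, d1, d2, d3, d4] at h0 h1 h2 h3
    linarith
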